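/- Let X and Y be normed spaces over ℂ, let u ∈ X with ‖u‖ = 1, and let E = X ⊕¹ Y be the product X × Y equipped with the norm ‖(x,y)‖ = ‖x‖ + ‖y‖. Then n(E; (u,0)) = n(X; u). -/

import Mathlib

/-- `S(X;u)`: the set of norm-one continuous linear functionals attaining value `1` at `u`. -/
def geomStates {X : Type*} [NormedAddCommGroup X] [NormedSpace ℂ X] (u : X) :
    Set (X →L[ℂ] ℂ) :=
  {f | ‖f‖ = 1 ∧ f u = 1}

/-- `γ^u(x) = sup {|f(x)| : f ∈ S(X;u)}`. -/
noncomputable def geomGamma {X : Type*} [NormedAddCommGroup X] [NormedSpace ℂ X]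
    (u x : X) : ℝ :=
  sSup {r : ℝ | ∃ f ∈ geomStates u, r = ‖f x‖}

/-- `n(X;u) = inf {γ^u(x) : ‖x‖ = 1}`. -/
noncomputable def geomN {X : Type*} [NormedAddCommGroup X] [NormedSpace ℂ X] (u : X) : ℝ :=
  sInf {r : ℝ | ∃ x : X, ‖x‖ = 1 ∧ r = geomGamma u x}

/-!
States of `X ⊕¹ Y` at `(u, 0)` restrict to states of `X` at `u`, and every state `f` of `X` at
`u` extends to `(x, y) ↦ f x + g y` for any `g` of norm at most one. So `γ(x, 0)` is computed in
`X`, which gives `n(X ⊕¹ Y) ≤ n(X)`. For a unit vector `(x, y)`, taking for `g` a norming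
functional of `y` rotated into the phase of `f x` gives
`γ(x, y) ≥ γ(x) + ‖y‖ ≥ n(X) ‖x‖ + ‖y‖ ≥ n(X)`, the last step because `n(X) ≤ 1`.
-/

open ContinuousLinearMap WithLp
open scoped Pointwise

section States

variable {X : Type*} [NormedAddCommGroup X] [NormedSpace ℂ X]

lemma mem_geomStates_of_opNorm_le_one {u : X} (hu : ‖u‖ = 1) {f : X →L[ℂ] ℂ}
    (hf : ‖f‖ ≤ 1) (hfu : f u = 1) : f ∈ geomStates u := by
  refine ⟨le_antisymm hf ?_, hfu⟩
  simpa [hfu, hu] using f.le_opNorm u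

lemma geomStates_nonempty {u : X} (hu : ‖u‖ = 1) : (geomStates u).Nonempty := by
  obtain ⟨f, hf, hfu⟩ := exists_dual_vector'' ℂ u
  exact ⟨f, mem_geomStates_of_opNorm_le_one hu hf (by simp [hfu, hu])⟩

lemma bddAbove_norm_apply_geomStates (u x : X) :
    BddAbove {r : ℝ | ∃ f ∈ geomStates u, r = ‖f x‖} := by
  refine ⟨‖x‖, ?_⟩
  rintro r ⟨f, hf, rfl⟩
  simpa [hf.1] using f.le_opNorm x

lemma norm_apply_le_geomGamma {u : X} {f : X →L[ℂ] ℂ} (hf : f ∈ geomStates u) (x : X) :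
    ‖f x‖ ≤ geomGamma u x :=
  le_csSup (bddAbove_norm_apply_geomStates u x) ⟨f, hf, rfl⟩

lemma geomGamma_le {u x : X} {a : ℝ} (hu : ‖u‖ = 1) (h : ∀ f ∈ geomStates u, ‖f x‖ ≤ a) :
    geomGamma u x ≤ a := by
  obtain ⟨f, hf⟩ := geomStates_nonempty hu
  exact csSup_le ⟨_, f, hf, rfl⟩ fun _ ⟨g, hg, hr⟩ => hr ▸ h g hg

lemma geomGamma_nonneg (u x : X) : 0 ≤ geomGamma u x :=
  Real.sSup_nonneg fun _ ⟨_, _, hr⟩ => hr ▸ norm_nonneg _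

lemma geomGamma_self {u : X} (hu : ‖u‖ = 1) : geomGamma u u = 1 := by
  obtain ⟨f, hf⟩ := geomStates_nonempty hu
  refine le_antisymm (geomGamma_le hu fun g hg => by simp [hg.2]) ?_
  simpa [hf.2] using norm_apply_le_geomGamma hf u

lemma geomGamma_smul (u x : X) (c : ℂ) : geomGamma u (c • x) = ‖c‖ * geomGamma u x := by
  have hset : {r : ℝ | ∃ f ∈ geomStates u, r = ‖f (c • x)‖}
      = ‖c‖ • {r : ℝ | ∃ f ∈ geomStates u, r = ‖f x‖} := by
    ext r
    simp only [map_smul, smul_eq_mul, norm_mul, Set.mem_smul_set, Set.mem_ofPred_eq]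
    constructor
    · rintro ⟨f, hf, rfl⟩
      exact ⟨_, ⟨f, hf, rfl⟩, rfl⟩
    · rintro ⟨_, ⟨f, hf, rfl⟩, rfl⟩
      exact ⟨f, hf, rfl⟩
  rw [geomGamma, hset, Real.sSup_smul_of_nonneg (norm_nonneg c), smul_eq_mul, geomGamma]

lemma geomN_le_geomGamma {u x : X} (hx : ‖x‖ = 1) : geomN u ≤ geomGamma u x :=
  csInf_le ⟨0, fun _ ⟨y, _, hr⟩ => hr ▸ geomGamma_nonneg u y⟩ ⟨x, hx, rfl⟩

lemma le_geomN {u : X} {a : ℝ} (hu : ‖u‖ = 1) (h : ∀ x : X, ‖x‖ = 1 → a ≤ geomGamma u x) :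
    a ≤ geomN u :=
  le_csInf ⟨_, u, hu, rfl⟩ fun _ ⟨x, hx, hr⟩ => hr ▸ h x hx

lemma geomN_le_one {u : X} (hu : ‖u‖ = 1) : geomN u ≤ 1 :=
  geomGamma_self hu ▸ geomN_le_geomGamma hu

lemma geomN_mul_norm_le_geomGamma (u x : X) : geomN u * ‖x‖ ≤ geomGamma u x := by
  rcases eq_or_ne x 0 with rfl | hx
  · simpa using geomGamma_nonneg u 0
  have hx' : ‖x‖ ≠ 0 := norm_ne_zero_iff.mpr hx
  calc geomN u * ‖x‖ ≤ geomGamma u ((‖x‖⁻¹ : ℂ) • x) * ‖x‖ := by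
        gcongr
        exact geomN_le_geomGamma (norm_smul_inv_norm hx)
    _ = geomGamma u x := by
        rw [geomGamma_smul, norm_inv, Complex.norm_real, norm_norm]
        field_simp

end States

section L1

variable {𝕜 X Y Z : Type*} [NontriviallyNormedField 𝕜]
  [SeminormedAddCommGroup X] [NormedSpace 𝕜 X] [SeminormedAddCommGroup Y] [NormedSpace 𝕜 Y]
  [SeminormedAddCommGroup Z] [NormedSpace 𝕜 Z]

noncomputable def l1Coprod (f : X →L[𝕜] Z) (g : Y →L[𝕜] Z) : WithLp 1 (X × Y) →L[𝕜] Z :=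
  (f.coprod g).comp (prodContinuousLinearEquiv 1 𝕜 X Y).toContinuousLinearMap

@[simp]
lemma l1Coprod_apply (f : X →L[𝕜] Z) (g : Y →L[𝕜] Z) (z : WithLp 1 (X × Y)) :
    l1Coprod f g z = f z.fst + g z.snd :=
  rfl

lemma opNorm_l1Coprod_le (f : X →L[𝕜] Z) (g : Y →L[𝕜] Z) : ‖l1Coprod f g‖ ≤ max ‖f‖ ‖g‖ := by
  refine opNorm_le_bound _ (by positivity) fun z => ?_
  rw [l1Coprod_apply, prod_norm_eq_of_L1, mul_add]
  calc ‖f z.fst + g z.snd‖ ≤ ‖f‖ * ‖z.fst‖ + ‖g‖ * ‖z.snd‖ :=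
        (norm_add_le _ _).trans (add_le_add (f.le_opNorm _) (g.le_opNorm _))
    _ ≤ max ‖f‖ ‖g‖ * ‖z.fst‖ + max ‖f‖ ‖g‖ * ‖z.snd‖ := by
        gcongr
        exacts [le_max_left _ _, le_max_right _ _]

variable (𝕜 X Y) in
noncomputable def l1Inl : X →L[𝕜] WithLp 1 (X × Y) :=
  (prodContinuousLinearEquiv 1 𝕜 X Y).symm.toContinuousLinearMap.comp (inl 𝕜 X Y)

@[simp]
lemma l1Inl_apply (x : X) : l1Inl 𝕜 X Y x = toLp 1 (x, 0) :=
  rfl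

@[simp]
lemma norm_toLp_inl (x : X) : ‖toLp 1 (x, (0 : Y))‖ = ‖x‖ := by
  simp

lemma opNorm_l1Inl_le : ‖l1Inl 𝕜 X Y‖ ≤ 1 :=
  opNorm_le_bound _ zero_le_one fun x => by simp

end L1

section L1States

variable {X Y : Type*} [NormedAddCommGroup X] [NormedSpace ℂ X]
  [NormedAddCommGroup Y] [NormedSpace ℂ Y] {u : X}

lemma l1Coprod_mem_geomStates (hu : ‖u‖ = 1) {f : X →L[ℂ] ℂ} (hf : f ∈ geomStates u)
    {g : Y →L[ℂ] ℂ} (hg : ‖g‖ ≤ 1) : l1Coprod f g ∈ geomStates (toLp 1 (u, (0 : Y))) :=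
  mem_geomStates_of_opNorm_le_one (by simpa) ((opNorm_l1Coprod_le f g).trans
    (max_le hf.1.le hg)) (by simp [hf.2])

lemma comp_l1Inl_mem_geomStates (hu : ‖u‖ = 1) {F : WithLp 1 (X × Y) →L[ℂ] ℂ}
    (hF : F ∈ geomStates (toLp 1 (u, (0 : Y)))) : F.comp (l1Inl ℂ X Y) ∈ geomStates u :=
  mem_geomStates_of_opNorm_le_one hu ((opNorm_comp_le _ _).trans
    (by simpa [hF.1] using opNorm_l1Inl_le)) hF.2

lemma geomGamma_toLp_inl (hu : ‖u‖ = 1) (x : X) :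
    geomGamma (toLp 1 (u, (0 : Y))) (toLp 1 (x, 0)) = geomGamma u x := by
  refine le_antisymm (geomGamma_le (by simpa) fun F hF => ?_) (geomGamma_le hu fun f hf => ?_)
  · exact norm_apply_le_geomGamma (comp_l1Inl_mem_geomStates hu hF) x
  · simpa using norm_apply_le_geomGamma (l1Coprod_mem_geomStates hu hf (g := 0) (by simp))
      (toLp 1 (x, 0))

lemma geomGamma_fst_add_norm_snd_le (hu : ‖u‖ = 1) (z : WithLp 1 (X × Y)) :
    geomGamma u z.fst + ‖z.snd‖ ≤ geomGamma (toLp 1 (u, (0 : Y))) z := by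
  suffices ∀ f ∈ geomStates u, ‖f z.fst‖ ≤ geomGamma (toLp 1 (u, (0 : Y))) z - ‖z.snd‖ by
    linarith [geomGamma_le hu this]
  intro f hf
  obtain ⟨g, hg, hgz⟩ := exists_dual_vector'' ℂ z.snd
  obtain ⟨θ, hθ, hfθ⟩ : ∃ θ : ℂ, ‖θ‖ = 1 ∧ f z.fst = ‖f z.fst‖ * θ :=
    ⟨_, Complex.norm_exp_ofReal_mul_I _, (Complex.norm_mul_exp_arg_mul_I _).symm⟩
  have hmem := l1Coprod_mem_geomStates hu hf (g := θ • g)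
    ((opNorm_smul_le θ g).trans (by simpa [hθ] using hg))
  have happ : l1Coprod f (θ • g) z = ((‖f z.fst‖ + ‖z.snd‖ : ℝ) : ℂ) * θ := by
    simp only [l1Coprod_apply, smul_apply, smul_eq_mul, hgz]
    push_cast
    linear_combination hfθ
  have hle := norm_apply_le_geomGamma hmem z
  rw [happ, norm_mul, hθ, mul_one, Complex.norm_real, Real.norm_of_nonneg (by positivity)] at hle
  linarith

end L1States

theorem geomN_prod_l1_left
    {X Y : Type*} [NormedAddCommGroup X] [NormedSpace ℂ X]
    [NormedAddCommGroup Y] [NormedSpace ℂ Y]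
    (u : X) (hu : ‖u‖ = 1) :
    geomN ((WithLp.equiv 1 (X × Y)).symm (u, 0)) = geomN u := by
  rw [WithLp.equiv_symm_apply]
  have hu0 : ‖toLp 1 (u, (0 : Y))‖ = 1 := by simpa
  refine le_antisymm ?_ (le_geomN hu0 fun z hz => ?_)
  · refine le_geomN hu fun x hx => ?_
    rw [← geomGamma_toLp_inl (Y := Y) hu x]
    exact geomN_le_geomGamma (by simpa)
  · calc geomN u = geomN u * ‖z.fst‖ + geomN u * ‖z.snd‖ := by
          rw [← mul_add, ← prod_norm_eq_of_L1, hz, mul_one]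
      _ ≤ geomGamma u z.fst + ‖z.snd‖ :=
          add_le_add (geomN_mul_norm_le_geomGamma u z.fst)
            (mul_le_of_le_one_left (norm_nonneg _) (geomN_le_one hu))
      _ ≤ geomGamma (toLp 1 (u, 0)) z := geomGamma_fst_add_norm_snd_le hu z
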